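/- arXiv:1203.6233 — 5 statements merged into one kernel-verified Lean document; each statement's English description precedes it below -/
import Mathlib

section
/- Let a DNA sequence s of length G over {A,C,G,T} contain two interleaved pairs of repeats: there are positions giving identical substrings at two pairs of locations arranged in interleaved order, so that swapping the intervening segments x and y produces a distinct sequence s' with the same multiset of length-L substrings (with multiplicity) as s. Then for reads drawn uniformly at random from the sequence, P(r_1,...,r_N | s) = P(r_1,...,r_N | s') for every read sequence, and the MAP estimator has error probability at least 1/2 conditioned on this event, regardless of N. -/
open Finset

/-- The length-`L` read of the circular sequence `s` starting at position `t`. -/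
def readAt {G : ℕ} (L : ℕ) (hG : 0 < G) (s : Fin G → Fin 4) (t : Fin G) :
    Fin L → Fin 4 :=
  fun i => s ⟨((t : ℕ) + (i : ℕ)) % G, Nat.mod_lt _ hG⟩

/-- Number of occurrences of the length-`L` string `r` in the circular sequence `s`. -/
def occCount {G : ℕ} (L : ℕ) (hG : 0 < G) (s : Fin G → Fin 4)
    (r : Fin L → Fin 4) : ℕ :=
  (Finset.univ.filter fun t : Fin G => readAt L hG s t = r).card

/-!
Equal substring counts make the read-tuple distributions of `s` and `s'` identical: the number
of start-position tuples producing a given tuple of reads is a product of substring counts.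
Hence any estimator's error under `s'` equals its error under `s` with target `s'`, and since
`φ` cannot equal both `s` and `s'`, the two error probabilities add up to at least one.
-/

section Fibers

variable {α β : Type*} [Fintype α] [DecidableEq β]

theorem Fintype.sum_comp_eq_of_card_fiber_eq {M : Type*} [AddCommMonoid M] [Fintype β]
    (g g' : α → β) (h : ∀ b, #{a | g a = b} = #{a | g' a = b}) (F : β → M) :
    ∑ a, F (g a) = ∑ a, F (g' a) := by
  simp only [← Finset.sum_fiberwise' univ g F, ← Finset.sum_fiberwise' univ g' F, sum_const, h]

theorem Fintype.card_filter_comp_eq_prod {ι : Type*} [Fintype ι] [DecidableEq ι]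
    (f : α → β) (rs : ι → β) :
    #{t : ι → α | (fun i => f (t i)) = rs} = ∏ i, #{a | f a = rs i} := by
  rw [← Fintype.card_piFinset]
  congr 1
  ext t
  simp [Fintype.mem_piFinset, funext_iff]

end Fibers

/-- If two distinct circular sequences `s, s'` have the same number of
occurrences of every length-`L` substring, then the likelihood of every tuple of reads
is the same under `s` and `s'`, and any (MAP or other) estimator has error probability
at least `1/2` under the uniform prior on `{s, s'}`, regardless of the number of reads `N`. -/
theorem interleaved_repeats_map_error (G L N : ℕ) (hG : 0 < G)
    (s s' : Fin G → Fin 4) (hne : s ≠ s')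
    (hocc : ∀ r : Fin L → Fin 4, occCount L hG s r = occCount L hG s' r) :
    (∀ rs : Fin N → Fin L → Fin 4,
      (∏ n, (occCount L hG s (rs n) : ℝ) / G)
        = ∏ n, (occCount L hG s' (rs n) : ℝ) / G) ∧
    (∀ φ : (Fin N → Fin L → Fin 4) → (Fin G → Fin 4),
      (1 / 2 : ℝ) ≤
        (1 / 2) * (∑ t : Fin N → Fin G, (1 / (G : ℝ)) ^ N *
            (if φ (fun n => readAt L hG s (t n)) ≠ s then 1 else 0)) +
        (1 / 2) * (∑ t : Fin N → Fin G, (1 / (G : ℝ)) ^ N *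
            (if φ (fun n => readAt L hG s' (t n)) ≠ s' then 1 else 0))) := by
  refine ⟨fun rs => prod_congr rfl fun n _ => by rw [hocc], fun φ => ?_⟩
  set c : ℝ := (1 / (G : ℝ)) ^ N
  have hswap :
      ∑ t : Fin N → Fin G, c * (if φ (fun n => readAt L hG s' (t n)) ≠ s' then 1 else 0)
      = ∑ t : Fin N → Fin G, c * (if φ (fun n => readAt L hG s (t n)) ≠ s' then 1 else 0) :=
    Fintype.sum_comp_eq_of_card_fiber_eq _ _
      (fun rs => by
        simp only [Fintype.card_filter_comp_eq_prod]
        exact prod_congr rfl fun n _ => (hocc _).symm)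
      fun rs => c * if φ rs ≠ s' then 1 else 0
  have hmass : ∑ _t : Fin N → Fin G, c = 1 := by
    simp [c, Fintype.card_pi, div_pow, hG.ne']
  have hmiss (x : Fin G → Fin 4) :
      (1 : ℝ) ≤ (if x ≠ s then 1 else 0) + (if x ≠ s' then 1 else 0) := by
    rcases eq_or_ne x s with rfl | hx
    · simp [hne]
    · simp only [hx, ne_eq, not_false_eq_true, if_true]
      split_ifs <;> norm_num
  rw [hswap, ← mul_add, ← sum_add_distrib]
  calc (1 / 2 : ℝ) = 1 / 2 * ∑ _t : Fin N → Fin G, c * 1 := by simp only [mul_one, hmass]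
    _ ≤ _ := by gcongr with t; rw [← mul_add]; gcongr; exact hmiss _
end

section
/- Suppose a DNA sequence of length G contains exactly k repeats whose positions are, conditionally, a uniformly random non-crossing structure in the sense of the Catalan-number model of Arratia et al. Then the probability that no two pairs of repeats are interleaved equals 2^k/(k+1)!. -/
/-!
A perfect matching of `s` is encoded as an involution whose moved points are exactly `s`. A
matching that preserves a subset `t ⊆ s` is the piecewise union of a matching of `t` and one of
`s \ t`. Sorting the matchings of a `(2k + 2)`-set by the partner `b` of one of its points `a`
gives `2k + 1` classes, each in bijection with the matchings of a `2k`-set, hence `(2k - 1)‼`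
matchings. If the matching is noncrossing and `a` is the least point, no arc leaves `[a, b]`, so
it splits into noncrossing matchings of the points strictly between `a` and `b` and of the points
after `b`; summing over `b` gives the Catalan recursion, with value `0` on sets of odd size.
Finally `catalan k * (k + 1)! * k! = (2k)! = 2 ^ k * k! * (2k - 1)‼`.
-/

open Finset Function
open scoped Nat

variable {α : Type*}

def IsPerfectMatching (s : Finset α) (f : α → α) : Prop :=
  Involutive f ∧ ∀ x, f x ≠ x ↔ x ∈ s

namespace IsPerfectMatching

variable {s t : Finset α} {f g h : α → α} {x : α}

lemma apply_apply (hf : IsPerfectMatching s f) (x : α) : f (f x) = x := hf.1 x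

lemma apply_ne_self (hf : IsPerfectMatching s f) (hx : x ∈ s) : f x ≠ x := (hf.2 x).2 hx

lemma mem_of_apply_ne (hf : IsPerfectMatching s f) (hx : f x ≠ x) : x ∈ s := (hf.2 x).1 hx

lemma apply_eq_self (hf : IsPerfectMatching s f) (hx : x ∉ s) : f x = x :=
  not_not.mp (mt hf.mem_of_apply_ne hx)

lemma apply_mem (hf : IsPerfectMatching s f) (hx : x ∈ s) : f x ∈ s :=
  hf.mem_of_apply_ne fun h => hf.apply_ne_self hx (by rw [← h, hf.apply_apply])

variable [DecidableEq α]

lemma piecewise_self_id (hf : IsPerfectMatching s f) : s.piecewise f id = f := by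
  ext x
  by_cases hx : x ∈ s
  · simp [hx]
  · simp [hx, hf.apply_eq_self hx]

lemma piecewise (hg : IsPerfectMatching s g) (hh : IsPerfectMatching t h) (hst : Disjoint s t) :
    IsPerfectMatching (s ∪ t) (s.piecewise g h) := by
  have hh_notMem : ∀ x, x ∉ s → h x ∉ s := fun x hx hhx => by
    by_cases hxt : x ∈ t
    · exact disjoint_left.mp hst hhx (hh.apply_mem hxt)
    · exact hx (hh.apply_eq_self hxt ▸ hhx)
  refine ⟨fun x => ?_, fun x => ?_⟩
  · by_cases hx : x ∈ s
    · simp [hx, hg.apply_mem hx, hg.apply_apply]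
    · simp [hx, hh_notMem x hx, hh.apply_apply]
  · by_cases hx : x ∈ s
    · simp [hx, hg.apply_ne_self hx]
    · simp [hx, hh.2 x]

lemma restrict (hf : IsPerfectMatching s f) (ht : ∀ x ∈ t, f x ∈ t) :
    IsPerfectMatching (s ∩ t) (t.piecewise f id) := by
  refine ⟨fun x => ?_, fun x => ?_⟩
  · by_cases hx : x ∈ t
    · simp [hx, ht x hx, hf.apply_apply]
    · simp [hx]
  · by_cases hx : x ∈ t
    · simp [hx, hf.2 x]
    · simp [hx]

lemma mapsTo_sdiff (hf : IsPerfectMatching s f) (ht : ∀ x ∈ t, f x ∈ t) :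
    ∀ x ∈ s \ t, f x ∈ s \ t := by
  intro x hx
  rw [mem_sdiff] at hx ⊢
  exact ⟨hf.apply_mem hx.1, fun hfx => hx.2 (hf.apply_apply x ▸ ht _ hfx)⟩

lemma piecewise_restrict (hf : IsPerfectMatching s f) (t : Finset α) :
    t.piecewise (t.piecewise f id) ((s \ t).piecewise f id) = f := by
  rw [piecewise_idem_left]
  ext x
  by_cases hxt : x ∈ t
  · simp [hxt]
  · by_cases hxs : x ∈ s
    · simp [hxt, hxs]
    · simp [hxt, hxs, hf.apply_eq_self hxs]

lemma apply_eq_iff_mapsTo_pair {a b : α} (hf : IsPerfectMatching s f) (ha : a ∈ s) :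
    f a = b ↔ ∀ x ∈ ({a, b} : Finset α), f x ∈ ({a, b} : Finset α) := by
  constructor
  · rintro rfl x hx
    rcases mem_insert.mp hx with rfl | hx
    · simp
    · simp [mem_singleton.mp hx, hf.apply_apply]
  · intro h
    simpa [hf.apply_ne_self ha] using h a (mem_insert_self a {b})

end IsPerfectMatching

section Fintype

variable [DecidableEq α] [Fintype α] {s t : Finset α} {f : α → α} {a b : α}

instance (s : Finset α) : DecidablePred (IsPerfectMatching s) := fun f =>
  inferInstanceAs (Decidable ((∀ x, f (f x) = x) ∧ ∀ x, f x ≠ x ↔ x ∈ s))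

def perfectMatchings (s : Finset α) : Finset (α → α) := {f | IsPerfectMatching s f}

lemma mem_perfectMatchings :
    f ∈ perfectMatchings s ↔ IsPerfectMatching s f := by
  simp [perfectMatchings]

lemma card_filter_mapsTo_eq_mul (hts : t ⊆ s) {R P Q : (α → α) → Prop}
    [DecidablePred R] [DecidablePred P] [DecidablePred Q]
    (hRPQ : ∀ g h, IsPerfectMatching t g → IsPerfectMatching (s \ t) h →
      (R (t.piecewise g h) ↔ P g ∧ Q h)) :
    #{f ∈ perfectMatchings s | (∀ x ∈ t, f x ∈ t) ∧ R f} =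
      #{g ∈ perfectMatchings t | P g} * #{h ∈ perfectMatchings (s \ t) | Q h} := by
  rw [← card_product]
  refine card_nbij' (fun f => (t.piecewise f id, (s \ t).piecewise f id))
    (fun p => t.piecewise p.1 p.2) ?_ ?_ ?_ ?_
  · intro f hf
    simp only [mem_coe, mem_filter, mem_product, mem_perfectMatchings] at hf ⊢
    obtain ⟨hf, ht, hR⟩ := hf
    have hg := hf.restrict ht
    have hh := hf.restrict (hf.mapsTo_sdiff ht)
    rw [inter_eq_right.mpr hts] at hg
    rw [inter_eq_right.mpr sdiff_subset] at hh
    rw [← hf.piecewise_restrict t, hRPQ _ _ hg hh] at hR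
    exact ⟨⟨hg, hR.1⟩, hh, hR.2⟩
  · rintro ⟨g, h⟩ hgh
    simp only [mem_coe, mem_filter, mem_product, mem_perfectMatchings] at hgh ⊢
    obtain ⟨⟨hg, hP⟩, hh, hQ⟩ := hgh
    have hF := hg.piecewise hh disjoint_sdiff
    rw [union_sdiff_of_subset hts] at hF
    refine ⟨hF, fun x hx => ?_, (hRPQ g h hg hh).mpr ⟨hP, hQ⟩⟩
    rw [piecewise_eq_of_mem _ _ _ hx]
    exact hg.apply_mem hx
  · intro f hf
    simp only [mem_coe, mem_filter, mem_perfectMatchings] at hf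
    exact hf.1.piecewise_restrict t
  · rintro ⟨g, h⟩ hgh
    simp only [mem_coe, mem_filter, mem_product, mem_perfectMatchings] at hgh
    obtain ⟨⟨hg, -⟩, hh, -⟩ := hgh
    refine Prod.ext ?_ ?_
    · simp only [piecewise_idem_left, hg.piecewise_self_id]
    · ext x
      by_cases hx : x ∈ s \ t
      · simp [hx, (mem_sdiff.mp hx).2]
      · simp [hx, hh.apply_eq_self hx]

lemma perfectMatchings_empty : perfectMatchings (∅ : Finset α) = {id} := by
  ext f
  simp only [mem_perfectMatchings, mem_singleton, IsPerfectMatching, notMem_empty, iff_false,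
    not_not]
  refine ⟨fun hf => funext hf.2, ?_⟩
  rintro rfl
  exact ⟨fun _ => rfl, fun _ => rfl⟩

lemma perfectMatchings_pair (hab : a ≠ b) :
    perfectMatchings {a, b} = {⇑(Equiv.swap a b)} := by
  ext f
  rw [mem_perfectMatchings, mem_singleton]
  constructor
  · intro hf
    have hfa : f a = b := by
      have := hf.apply_mem (mem_insert_self a {b})
      simpa [hf.apply_ne_self (mem_insert_self a {b})] using this
    ext x
    by_cases hxa : x = a
    · simp [hxa, hfa]
    by_cases hxb : x = b
    · simp [hxb, ← hfa, hf.apply_apply]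
    · simp [Equiv.swap_apply_of_ne_of_ne hxa hxb, hf.apply_eq_self, hxa, hxb]
  · rintro rfl
    refine ⟨Equiv.swap_apply_self a b, fun x => ?_⟩
    by_cases hxa : x = a
    · simp [hxa, hab.symm]
    by_cases hxb : x = b
    · simp [hxb, hab]
    · simp [Equiv.swap_apply_of_ne_of_ne hxa hxb, hxa, hxb]

lemma card_filter_apply_eq (ha : a ∈ s) (hb : b ∈ s) (hab : a ≠ b) :
    #{f ∈ perfectMatchings s | f a = b} = #(perfectMatchings (s \ {a, b})) := by
  have hsub : ({a, b} : Finset α) ⊆ s := insert_subset ha (singleton_subset_iff.mpr hb)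
  have hsplit := card_filter_mapsTo_eq_mul hsub (R := fun _ => True) (P := fun _ => True)
    (Q := fun _ => True) (fun _ _ _ _ => by simp)
  simp only [and_true, filter_true, perfectMatchings_pair hab, card_singleton, one_mul] at hsplit
  rw [← hsplit]
  congr 1
  exact filter_congr fun f hf => (mem_perfectMatchings.mp hf).apply_eq_iff_mapsTo_pair ha

lemma card_perfectMatchings {k : ℕ} (hs : #s = 2 * k) :
    #(perfectMatchings s) = (2 * k - 1)‼ := by
  induction k generalizing s with
  | zero => simp [card_eq_zero.mp hs, perfectMatchings_empty]
  | succ k ih =>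
    obtain ⟨a, ha⟩ := card_pos.mp (by omega : 0 < #s)
    have hfiber : ∀ b ∈ s.erase a, #{f ∈ perfectMatchings s | f a = b} = (2 * k - 1)‼ := by
      intro b hb
      obtain ⟨hba, hb⟩ := mem_erase.mp hb
      rw [card_filter_apply_eq ha hb hba.symm, ih]
      rw [card_sdiff_of_subset (insert_subset ha (singleton_subset_iff.mpr hb)),
        card_pair hba.symm, hs]
      omega
    have hmaps : Set.MapsTo (fun f : α → α => f a) ↑(perfectMatchings s) ↑(s.erase a) :=
      fun f hf => by
        have hf := mem_perfectMatchings.mp (mem_coe.mp hf)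
        exact mem_coe.mpr (mem_erase.mpr ⟨hf.apply_ne_self ha, hf.apply_mem ha⟩)
    rw [card_eq_sum_card_fiberwise hmaps, sum_congr rfl hfiber, sum_const, card_erase_of_mem ha,
      hs, smul_eq_mul, show 2 * (k + 1) - 1 = 2 * k + 1 by omega, Nat.doubleFactorial_add_one]

end Fintype

def aeratedCatalan (n : ℕ) : ℕ := if Even n then catalan (n / 2) else 0

lemma aeratedCatalan_two_mul (k : ℕ) : aeratedCatalan (2 * k) = catalan k := by
  simp [aeratedCatalan]

lemma aeratedCatalan_succ (n : ℕ) :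
    aeratedCatalan (n + 1) = ∑ t ∈ range n, aeratedCatalan t * aeratedCatalan (n - 1 - t) := by
  rcases n with _ | m
  · simp [aeratedCatalan]
  simp only [add_tsub_cancel_right]
  rw [← Nat.sum_antidiagonal_eq_sum_range_succ (fun i j => aeratedCatalan i * aeratedCatalan j)]
  rcases Nat.even_or_odd m with ⟨k, rfl⟩ | hodd
  · have hinj : Set.InjOn (fun p : ℕ × ℕ => (2 * p.1, 2 * p.2)) (antidiagonal k) :=
      fun p _ q _ h => by simp only [Prod.mk.injEq] at h; exact Prod.ext (by omega) (by omega)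
    have hsub : (antidiagonal k).image (fun p => (2 * p.1, 2 * p.2)) ⊆ antidiagonal (k + k) :=
      fun p hp => by
        obtain ⟨q, hq, rfl⟩ := mem_image.mp hp
        rw [Finset.HasAntidiagonal.mem_antidiagonal] at hq ⊢
        omega
    rw [show k + k + 1 + 1 = 2 * (k + 1) by ring, aeratedCatalan_two_mul, catalan_succ',
      ← sum_subset hsub, sum_image hinj]
    · simp only [aeratedCatalan_two_mul]
    · intro p hp hpi
      have hp1 : ¬ Even p.1 := fun ⟨i, hi⟩ => hpi <| mem_image.mpr ⟨(i, k - i), by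
        rw [Finset.HasAntidiagonal.mem_antidiagonal] at hp ⊢; omega, by
        rw [Finset.HasAntidiagonal.mem_antidiagonal] at hp; ext <;> simp <;> omega⟩
      simp [aeratedCatalan, hp1]
  · have hodd' : ¬ Even (m + 1 + 1) := by simpa [parity_simps] using hodd
    rw [aeratedCatalan, if_neg hodd', eq_comm]
    refine sum_eq_zero fun p hp => ?_
    rw [Finset.HasAntidiagonal.mem_antidiagonal] at hp
    have : ¬ Even p.1 ∨ ¬ Even p.2 := by
      by_contra! h
      exact Nat.not_even_iff_odd.mpr hodd (hp ▸ h.1.add h.2)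
    rcases this with h | h <;> simp [aeratedCatalan, h]

lemma catalan_mul_factorial_succ (k : ℕ) : catalan k * (k + 1)! = 2 ^ k * (2 * k - 1)‼ := by
  refine Nat.eq_of_mul_eq_mul_right (Nat.factorial_pos k) ?_
  have hcat : catalan k * (k + 1)! * k ! = (2 * k)! := by
    rw [Nat.factorial_succ, ← Nat.choose_mul_factorial_mul_factorial (by omega : k ≤ 2 * k),
      ← Nat.centralBinom_eq_two_mul_choose, ← succ_mul_catalan_eq_centralBinom,
      show 2 * k - k = k by omega]
    ring
  have hdouble : (2 * k)! = (2 * k)‼ * (2 * k - 1)‼ := by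
    rcases k with _ | k
    · rfl
    · rw [show 2 * (k + 1) = 2 * k + 1 + 1 by ring, Nat.factorial_eq_mul_doubleFactorial]
      rfl
  rw [hcat, hdouble, Nat.doubleFactorial_two_mul]
  ring

section LinearOrder

variable [LinearOrder α] {s t : Finset α} {f g h : α → α} {a b : α}

def Crossing (f : α → α) : Prop := ∃ a b, a < b ∧ b < f a ∧ f a < f b

lemma Crossing.of_eq_on_moved (hfg : ∀ x, g x ≠ x → f x = g x) (hg : Crossing g) :
    Crossing f := by
  obtain ⟨a, b, hab, hb, ha⟩ := hg
  refine ⟨a, b, ?_⟩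
  rw [hfg a (by order), hfg b (by order)]
  exact ⟨hab, hb, ha⟩

lemma crossing_piecewise_of_lt (hg : IsPerfectMatching s g) (hh : IsPerfectMatching t h)
    (hst : ∀ x ∈ s, ∀ y ∈ t, x < y) :
    Crossing (s.piecewise g h) ↔ Crossing g ∨ Crossing h := by
  have hdisj : Disjoint s t := disjoint_left.mpr fun x hs ht => lt_irrefl x (hst x hs x ht)
  have hF := hg.piecewise hh hdisj
  constructor
  · rintro ⟨x, y, hxy, hy, hx⟩
    have hxm : x ∈ s ∪ t := hF.mem_of_apply_ne (by order)
    have hym : y ∈ s ∪ t := hF.mem_of_apply_ne (by order)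
    by_cases hxs : x ∈ s
    · rw [piecewise_eq_of_mem _ _ _ hxs] at hy hx
      have hys : y ∈ s := by
        by_contra hys
        have := hst _ (hg.apply_mem hxs) y (by simpa [hys] using hym)
        order
      rw [piecewise_eq_of_mem _ _ _ hys] at hx
      exact Or.inl ⟨x, y, hxy, hy, hx⟩
    · have hxt : x ∈ t := by simpa [hxs] using hxm
      have hys : y ∉ s := fun hys => by have := hst y hys x hxt; order
      rw [piecewise_eq_of_notMem _ _ _ hxs] at hy hx
      rw [piecewise_eq_of_notMem _ _ _ hys] at hx
      exact Or.inr ⟨x, y, hxy, hy, hx⟩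
  · rintro (hc | hc)
    · exact hc.of_eq_on_moved fun x hx => piecewise_eq_of_mem _ _ _ (hg.mem_of_apply_ne hx)
    · exact hc.of_eq_on_moved fun x hx =>
        piecewise_eq_of_notMem _ _ _ (disjoint_right.mp hdisj (hh.mem_of_apply_ne hx))

lemma crossing_piecewise_pair (hab : a < b) (hg : IsPerfectMatching {a, b} g)
    (hh : IsPerfectMatching t h) (ht : ∀ x ∈ t, a < x ∧ x < b) :
    Crossing (({a, b} : Finset α).piecewise g h) ↔ Crossing h := by
  have hga : g a = b := (hg.apply_eq_iff_mapsTo_pair (mem_insert_self a {b})).mpr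
    fun x hx => hg.apply_mem hx
  have hgb : g b = a := by rw [← hga, hg.apply_apply]
  have hoff : ∀ x, x ≠ a → x ≠ b → ({a, b} : Finset α).piecewise g h x = h x := fun x hxa hxb =>
    piecewise_eq_of_notMem _ _ _ (by simp [hxa, hxb])
  constructor
  · rintro ⟨x, y, hxy, hy, hx⟩
    by_cases hxa : x = a
    · subst hxa
      rw [piecewise_eq_of_mem _ _ _ (mem_insert_self x {b}), hga] at hy hx
      rw [hoff y (by order) (by order)] at hx
      have hyt : y ∈ t := hh.mem_of_apply_ne (by order)
      have := ht _ (hh.apply_mem hyt)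
      order
    by_cases hxb : x = b
    · subst hxb
      rw [piecewise_eq_of_mem _ _ _ (by simp), hgb] at hy
      order
    rw [hoff x hxa hxb] at hy hx
    have hxt : x ∈ t := hh.mem_of_apply_ne (by order)
    have := ht x hxt
    have := ht _ (hh.apply_mem hxt)
    rw [hoff y (by order) (by order)] at hx
    exact ⟨x, y, hxy, hy, hx⟩
  · refine fun hc => hc.of_eq_on_moved fun x hx => hoff x ?_ ?_ <;>
    · have := ht x (hh.mem_of_apply_ne hx)
      order

lemma IsPerfectMatching.mapsTo_filter_le (hf : IsPerfectMatching s f) (ha : a ∈ s)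
    (hmin : ∀ x ∈ s, a ≤ x) (hfa : f a = b) (hnc : ¬ Crossing f) :
    ∀ x ∈ {x ∈ s | x ≤ b}, f x ∈ {x ∈ s | x ≤ b} := by
  -- an arc from inside `[a, b]` to beyond `b` would cross the arc `(a, b)`
  have hab : a ≤ b := hfa ▸ hmin _ (hf.apply_mem ha)
  have hfb : f b = a := by rw [← hfa, hf.apply_apply]
  intro x hx
  rw [mem_filter] at hx ⊢
  refine ⟨hf.apply_mem hx.1, not_lt.mp fun hbx => hnc ⟨a, x, ?_, ?_, by order⟩⟩
  · have : x ≠ a := by rintro rfl; order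
    have := hmin x hx.1
    order
  · have : x ≠ b := by rintro rfl; order
    order

lemma sum_card_filter_lt {β : Type*} [AddCommMonoid β] (u : Finset α) (F : ℕ → β) :
    ∑ b ∈ u, F #{x ∈ u | x < b} = ∑ t ∈ range #u, F t := by
  have hmono : StrictMonoOn (fun b => #{x ∈ u | x < b}) u := fun b hb c _ hbc =>
    card_lt_card <| (ssubset_iff_of_subset fun x hx =>
      mem_filter.mpr ⟨(mem_filter.mp hx).1, (mem_filter.mp hx).2.trans hbc⟩).mpr
        ⟨b, mem_filter.mpr ⟨hb, hbc⟩, by simp⟩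
  have himage : u.image (fun b => #{x ∈ u | x < b}) = range #u := by
    refine eq_of_subset_of_card_le (fun t ht => ?_) ?_
    · obtain ⟨b, hb, rfl⟩ := mem_image.mp ht
      exact mem_range.mpr (card_lt_card (filter_ssubset.mpr ⟨b, hb, lt_irrefl b⟩))
    · rw [card_range, card_image_of_injOn hmono.injOn]
  rw [← himage, sum_image hmono.injOn]

lemma card_filter_lt_add_card_filter_gt {u : Finset α} {b : α} (hb : b ∈ u) :
    #{x ∈ u | x < b} + #{x ∈ u | b < x} + 1 = #u := by
  have hge : {x ∈ u | ¬ x < b} = insert b {x ∈ u | b < x} := by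
    ext x
    simp only [mem_filter, mem_insert, not_lt]
    grind
  have hsplit := card_filter_add_card_filter_not (s := u) (p := (· < b))
  rw [hge, card_insert_of_notMem (by simp)] at hsplit
  omega

section Fintype

variable [Fintype α]

instance : DecidablePred (Crossing (α := α)) := fun f =>
  inferInstanceAs (Decidable (∃ a b, a < b ∧ b < f a ∧ f a < f b))

def noncrossingMatchings (s : Finset α) : Finset (α → α) :=
  {f ∈ perfectMatchings s | ¬ Crossing f}

lemma noncrossingMatchings_empty : noncrossingMatchings (∅ : Finset α) = {id} := by
  rw [noncrossingMatchings, perfectMatchings_empty, filter_singleton, if_pos]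
  rintro ⟨x, y, hxy, hy, -⟩
  exact lt_asymm hxy hy

lemma card_filter_noncrossing_apply_eq_of_between (hab : a < b) (hpair : {a, b} ⊆ s)
    (hbetween : ∀ x ∈ s \ {a, b}, a < x ∧ x < b) :
    #{f ∈ noncrossingMatchings s | f a = b} = #(noncrossingMatchings (s \ {a, b})) := by
  have ha : a ∈ s := hpair (mem_insert_self a {b})
  have hfilter : {f ∈ noncrossingMatchings s | f a = b} =
      {f ∈ perfectMatchings s | (∀ x ∈ ({a, b} : Finset α), f x ∈ ({a, b} : Finset α)) ∧
        ¬ Crossing f} := by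
    rw [noncrossingMatchings, filter_filter]
    refine filter_congr fun f hf => ?_
    rw [← (mem_perfectMatchings.mp hf).apply_eq_iff_mapsTo_pair ha, and_comm]
  rw [hfilter, card_filter_mapsTo_eq_mul hpair (R := fun f => ¬ Crossing f) (P := fun _ => True)
      (Q := fun h => ¬ Crossing h) fun g h hg hh => by
        rw [crossing_piecewise_pair hab hg hh hbetween, true_and],
    filter_true, perfectMatchings_pair hab.ne, card_singleton, one_mul]
  rfl

lemma card_filter_noncrossing_apply_eq (ha : a ∈ s) (hmin : ∀ x ∈ s, a ≤ x) (hb : b ∈ s)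
    (hab : a < b) :
    #{f ∈ noncrossingMatchings s | f a = b} =
      #(noncrossingMatchings {x ∈ s.erase a | x < b}) *
        #(noncrossingMatchings {x ∈ s.erase a | b < x}) := by
  set L := {x ∈ s | x ≤ b} with hL
  have haL : a ∈ L := mem_filter.mpr ⟨ha, hab.le⟩
  have hinner : L \ {a, b} = {x ∈ s.erase a | x < b} := by
    ext x
    simp only [hL, mem_sdiff, mem_filter, mem_insert, mem_singleton, mem_erase]
    grind
  have houter : s \ L = {x ∈ s.erase a | b < x} := by
    ext x
    simp only [hL, mem_sdiff, mem_filter, mem_erase]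
    grind
  have hfiber : {f ∈ noncrossingMatchings s | f a = b} =
      {f ∈ perfectMatchings s | (∀ x ∈ L, f x ∈ L) ∧ (¬ Crossing f ∧ f a = b)} := by
    rw [noncrossingMatchings, filter_filter]
    refine filter_congr fun f hf => ⟨fun ⟨hnc, hfa⟩ => ?_, fun h => h.2⟩
    exact ⟨(mem_perfectMatchings.mp hf).mapsTo_filter_le ha hmin hfa hnc, hnc, hfa⟩
  have hsplit := card_filter_mapsTo_eq_mul (filter_subset (· ≤ b) s)
    (R := fun f => ¬ Crossing f ∧ f a = b) (P := fun g => ¬ Crossing g ∧ g a = b)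
    (Q := fun h => ¬ Crossing h) fun g h hg hh => by
      rw [crossing_piecewise_of_lt hg hh, piecewise_eq_of_mem _ _ _ haL]
      · tauto
      · intro x hx y hy
        rw [houter, mem_filter] at hy
        exact (mem_filter.mp hx).2.trans_lt hy.2
  have harc := card_filter_noncrossing_apply_eq_of_between hab
    (insert_subset haL (singleton_subset_iff.mpr (mem_filter.mpr ⟨hb, le_rfl⟩)))
    fun x hx => by
      rw [hinner, mem_filter, mem_erase] at hx
      exact ⟨lt_of_le_of_ne (hmin x hx.1.2) (Ne.symm hx.1.1), hx.2⟩
  rw [noncrossingMatchings, filter_filter] at harc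
  rw [hfiber, hsplit, harc, hinner, houter]
  rfl

lemma card_noncrossingMatchings_eq_sum (ha : a ∈ s) (hmin : ∀ x ∈ s, a ≤ x) :
    #(noncrossingMatchings s) = ∑ b ∈ s.erase a,
      #(noncrossingMatchings {x ∈ s.erase a | x < b}) *
        #(noncrossingMatchings {x ∈ s.erase a | b < x}) := by
  have hmaps : Set.MapsTo (fun f : α → α => f a) ↑(noncrossingMatchings s) ↑(s.erase a) :=
    fun f hf => by
      have hf := mem_perfectMatchings.mp (mem_filter.mp (mem_coe.mp hf)).1
      exact mem_coe.mpr (mem_erase.mpr ⟨hf.apply_ne_self ha, hf.apply_mem ha⟩)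
  rw [card_eq_sum_card_fiberwise hmaps]
  refine sum_congr rfl fun b hb => ?_
  obtain ⟨hba, hb⟩ := mem_erase.mp hb
  exact card_filter_noncrossing_apply_eq ha hmin hb (lt_of_le_of_ne (hmin b hb) (Ne.symm hba))

lemma card_noncrossingMatchings (s : Finset α) :
    #(noncrossingMatchings s) = aeratedCatalan #s := by
  induction hn : #s using Nat.strong_induction_on generalizing s with
  | _ n ih =>
  rcases s.eq_empty_or_nonempty with rfl | hs
  · simp [← hn, noncrossingMatchings_empty, aeratedCatalan]
  obtain ⟨m, rfl⟩ : ∃ m, n = m + 1 := ⟨n - 1, by have := hs.card_pos; omega⟩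
  set a := s.min' hs
  have hu : #(s.erase a) = m := by rw [card_erase_of_mem (s.min'_mem hs), hn]; rfl
  have hterm : ∀ b ∈ s.erase a, #(noncrossingMatchings {x ∈ s.erase a | x < b}) *
      #(noncrossingMatchings {x ∈ s.erase a | b < x}) =
        aeratedCatalan #{x ∈ s.erase a | x < b} *
          aeratedCatalan (m - 1 - #{x ∈ s.erase a | x < b}) := by
    intro b hb
    have hcard := card_filter_lt_add_card_filter_gt hb
    rw [ih _ (by omega) _ rfl, ih _ (by omega) _ rfl]
    congr 2
    omega
  rw [card_noncrossingMatchings_eq_sum (s.min'_mem hs) (fun x hx => s.min'_le x hx),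
    sum_congr rfl hterm, sum_card_filter_lt (s.erase a)
      (fun t => aeratedCatalan t * aeratedCatalan (m - 1 - t)), hu, aeratedCatalan_succ]

end Fintype

end LinearOrder

/-- Under the uniform random (perfect) matching model on `2k` endpoints,
the probability that no two pairs are interleaved (crossing) equals `2^k/(k+1)!`. -/
theorem prob_no_interleaved_repeats (k : ℕ) :
    ((Finset.univ.filter fun f : Fin (2 * k) → Fin (2 * k) =>
        (∀ x, f (f x) = x) ∧ (∀ x, f x ≠ x) ∧
        ¬∃ a b : Fin (2 * k), a < b ∧ b < f a ∧ f a < f b).card : ℚ) /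
      ((Finset.univ.filter fun f : Fin (2 * k) → Fin (2 * k) =>
        (∀ x, f (f x) = x) ∧ (∀ x, f x ≠ x)).card : ℚ)
      = 2 ^ k / (Nat.factorial (k + 1) : ℚ) := by
  have hnc : (Finset.univ.filter fun f : Fin (2 * k) → Fin (2 * k) =>
      (∀ x, f (f x) = x) ∧ (∀ x, f x ≠ x) ∧ ¬∃ a b : Fin (2 * k), a < b ∧ b < f a ∧ f a < f b) =
      noncrossingMatchings univ := by
    ext f
    simp [noncrossingMatchings, mem_perfectMatchings, IsPerfectMatching, Involutive, Crossing,
      and_assoc]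
  have hpm : (Finset.univ.filter fun f : Fin (2 * k) → Fin (2 * k) =>
      (∀ x, f (f x) = x) ∧ (∀ x, f x ≠ x)) = perfectMatchings univ := by
    ext f
    simp [mem_perfectMatchings, IsPerfectMatching, Involutive]
  have hcard : #(univ : Finset (Fin (2 * k))) = 2 * k := by simp
  rw [hnc, hpm, card_noncrossingMatchings, card_perfectMatchings hcard, hcard,
    aeratedCatalan_two_mul, div_eq_div_iff (by positivity) (by positivity)]
  exact_mod_cast catalan_mul_factorial_succ k
end

section
/- Let (S_n) be a stationary Markov chain on a finite alphabet with transition matrix Q having all positive entries, and let X and Y be two length-ℓ windows of the chain with no physical overlap (in particular, jointly they factor through a common conditioning separating them). Then P(X = Y) ≤ γ ρ^ℓ where ρ = ρ_max(Q̄), Q̄ = (q_{ij}²), and γ is the Perron constant max_i(‖π‖_1/(π_i ρ)) for the Perron eigenvector π of Q̄. -/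
/-!
Write `P(X = Y) = ∑ₓ P(X = x, Y = x)`; the summand `x` is the mass of the paths pinned to `x` on
both windows. Propagating that mass forward in time, a step into a free state does not increase
it (the columns of `Q` sum to at most one), while a step between two pinned states multiplies it
by the transition probability. Each window therefore contributes `∏ᵢ q(xᵢ₊₁, xᵢ)` and the summand
is at most `∏ᵢ q(xᵢ₊₁, xᵢ)²`. Weighting the remaining sum over `x` by the Perron vector `π` of
`Q̄ = (q_ij²)` evaluates it as `ρ^(ℓ-1) ‖π‖₁`, and dividing by `min π` gives `γ ρ^ℓ`.
-/

open Finset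

section PathSums

variable {α : Type*} [Fintype α]

theorem sum_fun_snoc {n : ℕ} (F : (Fin (n + 1) → α) → ℝ) :
    ∑ s, F s = ∑ s : Fin n → α, ∑ z, F (Fin.snoc s z) := by
  rw [← (Fin.snocEquiv fun _ => α).sum_comp, Fintype.sum_prod_type_right]
  rfl

theorem sum_fun_cons {n : ℕ} (F : (Fin (n + 1) → α) → ℝ) :
    ∑ s, F s = ∑ s : Fin n → α, ∑ z, F (Fin.cons z s) := by
  rw [← (Fin.consEquiv fun _ => α).sum_comp, Fintype.sum_prod_type_right]
  rfl

end PathSums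

section PinnedPaths

variable {α : Type*}

def pathWeight (Q : Matrix α α ℝ) (p : α → ℝ) {n : ℕ} (s : Fin (n + 1) → α) : ℝ :=
  p (s 0) * ∏ t : Fin n, Q (s t.succ) (s t.castSucc)

theorem pathWeight_snoc (Q : Matrix α α ℝ) (p : α → ℝ) {n : ℕ} (s : Fin (n + 1) → α) (z : α) :
    pathWeight Q p (Fin.snoc s z : Fin (n + 2) → α) = pathWeight Q p s * Q z (s (Fin.last n)) := by
  simp only [pathWeight, Fin.prod_univ_castSucc, Fin.succ_castSucc, Fin.snoc_castSucc,
    Fin.succ_last, Fin.snoc_last]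
  rw [← Fin.castSucc_zero, Fin.snoc_castSucc, mul_assoc]

def Respects (c : ℕ → Option α) {k : ℕ} (s : Fin k → α) : Prop :=
  ∀ t : Fin k, ∀ z ∈ c t, s t = z

instance [DecidableEq α] (c : ℕ → Option α) {k : ℕ} : DecidablePred (Respects c (k := k)) :=
  fun s => inferInstanceAs (Decidable (∀ t : Fin k, ∀ z ∈ c t, s t = z))

theorem respects_snoc_iff (c : ℕ → Option α) {n : ℕ} (s : Fin (n + 1) → α) (z : α) :
    Respects c (Fin.snoc s z : Fin (n + 2) → α) ↔ Respects c s ∧ ∀ w ∈ c (n + 1), z = w := by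
  simp [Respects, Fin.forall_fin_succ']

def pinnedTransition (Q : Matrix α α ℝ) (c : ℕ → Option α) (t : ℕ) : ℝ :=
  match c t, c (t + 1) with
  | some y, some z => Q z y
  | _, _ => 1

theorem pinnedTransition_nonneg {Q : Matrix α α ℝ} (hQ : ∀ i j, 0 ≤ Q i j)
    (c : ℕ → Option α) (t : ℕ) : 0 ≤ pinnedTransition Q c t := by
  unfold pinnedTransition
  split
  · exact hQ _ _
  · exact zero_le_one

theorem pinnedTransition_le_one {Q : Matrix α α ℝ} (hQ : ∀ i j, Q i j ≤ 1)
    (c : ℕ → Option α) (t : ℕ) : pinnedTransition Q c t ≤ 1 := by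
  unfold pinnedTransition
  split
  · exact hQ _ _
  · rfl

end PinnedPaths

section ForwardMass

variable {α : Type*} [Fintype α] [DecidableEq α]

def respectingMass (Q : Matrix α α ℝ) (p : α → ℝ) (c : ℕ → Option α) : ℕ → α → ℝ
  | 0, y => if ∀ z ∈ c 0, y = z then p y else 0
  | n + 1, y => if ∀ z ∈ c (n + 1), y = z then ∑ x, Q y x * respectingMass Q p c n x else 0

theorem sum_ite_respects_pathWeight_mul (Q : Matrix α α ℝ) (p : α → ℝ) (c : ℕ → Option α)
    (n : ℕ) (g : α → ℝ) :
    ∑ s : Fin (n + 1) → α, (if Respects c s then pathWeight Q p s else 0) * g (s (Fin.last n)) =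
      ∑ y, respectingMass Q p c n y * g y := by
  induction n generalizing g with
  | zero =>
    rw [← (Equiv.funUnique (Fin 1) α).symm.sum_comp]
    refine sum_congr rfl fun y _ => ?_
    simp [Respects, respectingMass, pathWeight]
  | succ n ih =>
    let g' x := ∑ z, (if ∀ w ∈ c (n + 1), z = w then Q z x else 0) * g z
    calc _ = ∑ s : Fin (n + 1) → α,
          (if Respects c s then pathWeight Q p s else 0) * g' (s (Fin.last n)) := by
          rw [sum_fun_snoc]
          refine sum_congr rfl fun s _ => ?_
          rw [mul_sum]
          refine sum_congr rfl fun z _ => ?_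
          simp only [respects_snoc_iff, pathWeight_snoc, Fin.snoc_last, ite_and]
          split_ifs <;> ring
      _ = ∑ x, respectingMass Q p c n x * g' x := ih g'
      _ = _ := by
          simp only [g', mul_sum]
          rw [sum_comm]
          refine sum_congr rfl fun z _ => ?_
          simp only [respectingMass]
          split_ifs
          · rw [sum_mul]
            exact sum_congr rfl fun x _ => by ring
          · simp

theorem respectingMass_nonneg {Q : Matrix α α ℝ} {p : α → ℝ} (hQ : ∀ i j, 0 ≤ Q i j)
    (hp : ∀ i, 0 ≤ p i) (c : ℕ → Option α) (n : ℕ) (y : α) : 0 ≤ respectingMass Q p c n y := by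
  induction n generalizing y with
  | zero =>
    simp only [respectingMass]
    split_ifs
    · exact hp y
    · rfl
  | succ n ih =>
    simp only [respectingMass]
    split_ifs
    · exact sum_nonneg fun x _ => mul_nonneg (hQ y x) (ih x)
    · rfl

theorem respectingMass_eq_zero_of_pinned (Q : Matrix α α ℝ) (p : α → ℝ) {c : ℕ → Option α}
    {n : ℕ} {z y : α} (hz : c n = some z) (hy : y ≠ z) : respectingMass Q p c n y = 0 := by
  cases n <;> simp [respectingMass, hz, hy]

theorem sum_respectingMass_succ_le_sum {Q : Matrix α α ℝ} {p : α → ℝ} (hQ : ∀ i j, 0 ≤ Q i j)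
    (hcol : ∀ j, ∑ i, Q i j ≤ 1) (hp : ∀ i, 0 ≤ p i) (c : ℕ → Option α) (n : ℕ) :
    ∑ y, respectingMass Q p c (n + 1) y ≤ ∑ y, respectingMass Q p c n y :=
  calc ∑ y, respectingMass Q p c (n + 1) y
      ≤ ∑ y, ∑ x, Q y x * respectingMass Q p c n x := by
        refine sum_le_sum fun y _ => ?_
        simp only [respectingMass]
        split_ifs
        · rfl
        · exact sum_nonneg fun x _ => mul_nonneg (hQ y x) (respectingMass_nonneg hQ hp c n x)
    _ = ∑ x, (∑ y, Q y x) * respectingMass Q p c n x := by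
        rw [sum_comm]
        simp only [sum_mul]
    _ ≤ ∑ x, respectingMass Q p c n x :=
        sum_le_sum fun x _ => mul_le_of_le_one_left (respectingMass_nonneg hQ hp c n x) (hcol x)

theorem sum_respectingMass_succ_of_pinned (Q : Matrix α α ℝ) (p : α → ℝ) {c : ℕ → Option α}
    {n : ℕ} {y z : α} (hy : c n = some y) (hz : c (n + 1) = some z) :
    ∑ w, respectingMass Q p c (n + 1) w = Q z y * ∑ x, respectingMass Q p c n x := by
  have hsupp : ∀ x ≠ y, respectingMass Q p c n x = 0 := fun x hx =>
    respectingMass_eq_zero_of_pinned Q p hy hx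
  rw [sum_eq_single z (fun w _ hw => respectingMass_eq_zero_of_pinned Q p hz hw) (by simp),
    sum_eq_single y (fun x _ hx => hsupp x hx) (by simp)]
  simp only [respectingMass, hz, Option.mem_def, Option.some.injEq, forall_eq', if_true]
  rw [sum_eq_single y (fun x _ hx => by rw [hsupp x hx, mul_zero]) (by simp)]

theorem sum_respectingMass_succ_le {Q : Matrix α α ℝ} {p : α → ℝ} (hQ : ∀ i j, 0 ≤ Q i j)
    (hcol : ∀ j, ∑ i, Q i j ≤ 1) (hp : ∀ i, 0 ≤ p i) (c : ℕ → Option α) (n : ℕ) :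
    ∑ y, respectingMass Q p c (n + 1) y ≤
      pinnedTransition Q c n * ∑ y, respectingMass Q p c n y := by
  have hfree := sum_respectingMass_succ_le_sum hQ hcol hp c n
  unfold pinnedTransition
  rcases hy : c n with _ | y <;> rcases hz : c (n + 1) with _ | z
  · simpa using hfree
  · simpa using hfree
  · simpa using hfree
  · exact (sum_respectingMass_succ_of_pinned Q p hy hz).le

theorem sum_respectingMass_le_prod {Q : Matrix α α ℝ} {p : α → ℝ} (hQ : ∀ i j, 0 ≤ Q i j)
    (hcol : ∀ j, ∑ i, Q i j ≤ 1) (hp : ∀ i, 0 ≤ p i) (hpsum : ∑ i, p i ≤ 1)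
    (c : ℕ → Option α) (n : ℕ) :
    ∑ y, respectingMass Q p c n y ≤ ∏ t ∈ range n, pinnedTransition Q c t := by
  induction n with
  | zero =>
    refine (sum_le_sum fun y _ => ?_).trans (by simpa using hpsum)
    simp only [respectingMass]
    split_ifs
    · rfl
    · exact hp y
  | succ n ih =>
    rw [prod_range_succ, mul_comm]
    exact (sum_respectingMass_succ_le hQ hcol hp c n).trans
      (mul_le_mul_of_nonneg_left ih (pinnedTransition_nonneg hQ c n))

theorem sum_ite_respects_pathWeight_le {Q : Matrix α α ℝ} {p : α → ℝ} (hQ : ∀ i j, 0 ≤ Q i j)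
    (hcol : ∀ j, ∑ i, Q i j ≤ 1) (hp : ∀ i, 0 ≤ p i) (hpsum : ∑ i, p i ≤ 1)
    (c : ℕ → Option α) (n : ℕ) :
    ∑ s : Fin (n + 1) → α, (if Respects c s then pathWeight Q p s else 0) ≤
      ∏ t ∈ range n, pinnedTransition Q c t := by
  simpa using (sum_ite_respects_pathWeight_mul Q p c n 1).trans_le
    (by simpa using sum_respectingMass_le_prod hQ hcol hp hpsum c n)

end ForwardMass

section Windows

variable {α : Type*}

def window {m : ℕ} (s : Fin m → α) (a ℓ : ℕ) (h : a + ℓ ≤ m) : Fin ℓ → α :=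
  fun i => s ⟨a + i, by omega⟩

def windowPins {ℓ : ℕ} (a b : ℕ) (x : Fin ℓ → α) (t : ℕ) : Option α :=
  if h : a ≤ t ∧ t < a + ℓ then some (x ⟨t - a, by omega⟩)
  else if h : b ≤ t ∧ t < b + ℓ then some (x ⟨t - b, by omega⟩) else none

theorem windowPins_left {ℓ : ℕ} (a b : ℕ) (x : Fin ℓ → α) (i : Fin ℓ) :
    windowPins a b x (a + i) = some (x i) := by
  simp [windowPins]

theorem windowPins_right {ℓ a b : ℕ} (hab : a + ℓ ≤ b) (x : Fin ℓ → α) (i : Fin ℓ) :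
    windowPins a b x (b + i) = some (x i) := by
  have := i.isLt
  rw [windowPins, dif_neg (by omega), dif_pos (by omega)]
  simp

theorem respects_windowPins_iff {m ℓ a b : ℕ} (hab : a + ℓ ≤ b) (hbm : b + ℓ ≤ m)
    (s : Fin m → α) (x : Fin ℓ → α) :
    Respects (windowPins a b x) s ↔ window s a ℓ (by omega) = x ∧ window s b ℓ hbm = x := by
  constructor
  · intro h
    exact ⟨funext fun i => h ⟨a + i, _⟩ (x i) (windowPins_left a b x i),
      funext fun i => h ⟨b + i, _⟩ (x i) (windowPins_right hab x i)⟩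
  · rintro ⟨rfl, hY⟩ t z hz
    unfold windowPins at hz
    split_ifs at hz with h₁ h₂
    · obtain rfl := Option.mem_some_iff.1 hz
      exact congrArg s (Fin.ext (by simp; omega))
    · obtain rfl := Option.mem_some_iff.1 hz
      rw [← hY]
      exact congrArg s (Fin.ext (by simp; omega))
    · exact absurd hz (Option.not_mem_none z)

theorem ite_window_eq_sum_ite_respects [Fintype α] [DecidableEq α] {m ℓ a b : ℕ}
    (hab : a + ℓ ≤ b) (hbm : b + ℓ ≤ m) (s : Fin m → α) :
    (if ∀ i, window s a ℓ (by omega) i = window s b ℓ hbm i then (1 : ℝ) else 0) =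
      ∑ x : Fin ℓ → α, if Respects (windowPins a b x) s then 1 else 0 := by
  simp_rw [respects_windowPins_iff hab hbm, ← funext_iff]
  split_ifs with h
  · simp [h]
  · refine (sum_eq_zero fun x _ => if_neg ?_).symm
    rintro ⟨rfl, hY⟩
    exact h hY.symm

theorem prod_pinnedTransition_windowPins_le {Q : Matrix α α ℝ} (hQ : ∀ i j, 0 ≤ Q i j)
    (hQ1 : ∀ i j, Q i j ≤ 1) {m L a b : ℕ} (hab : a + (L + 1) ≤ b) (hbm : b + L ≤ m)
    (x : Fin (L + 1) → α) :
    ∏ t ∈ range m, pinnedTransition Q (windowPins a b x) t ≤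
      ∏ i : Fin L, Q (x i.succ) (x i.castSucc) ^ 2 := by
  set f := pinnedTransition Q (windowPins a b x)
  have hblock : ∀ c, (∀ i : Fin (L + 1), windowPins a b x (c + i) = some (x i)) →
      ∏ t ∈ Ico c (c + L), f t = ∏ i : Fin L, Q (x i.succ) (x i.castSucc) := by
    intro c hc
    rw [prod_Ico_eq_prod_range, add_tsub_cancel_left, ← Fin.prod_univ_eq_prod_range]
    refine prod_congr rfl fun i _ => ?_
    have h₁ := hc i.castSucc
    have h₂ := hc i.succ
    rw [Fin.val_castSucc] at h₁
    rw [Fin.val_succ, ← add_assoc] at h₂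
    simp [f, pinnedTransition, h₁, h₂]
  calc ∏ t ∈ range m, f t ≤ ∏ t ∈ Ico a (a + L) ∪ Ico b (b + L), f t :=
        prod_le_prod_of_subset_of_le_one (fun t ht => by simp at ht ⊢; omega)
          (fun t _ => pinnedTransition_nonneg hQ _ t) (fun t _ _ => pinnedTransition_le_one hQ1 _ t)
    _ = (∏ t ∈ Ico a (a + L), f t) * ∏ t ∈ Ico b (b + L), f t :=
        prod_union (disjoint_left.2 fun t h₁ h₂ => by simp at h₁ h₂; omega)
    _ = ∏ i : Fin L, Q (x i.succ) (x i.castSucc) ^ 2 := by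
        rw [hblock a (windowPins_left a b x), hblock b (windowPins_right hab x), ← sq, prod_pow]

end Windows

section Perron

variable {α : Type*} [Fintype α]

noncomputable def perronConstant (π : α → ℝ) (ρ : ℝ) : ℝ :=
  ⨆ i, (∑ j, π j) / (π i * ρ)

theorem sum_prod_mul_eigenvector {M : Matrix α α ℝ} {ρ : ℝ} {π : α → ℝ}
    (heig : ∀ i, ∑ j, M i j * π j = ρ * π i) (L : ℕ) :
    ∑ x : Fin (L + 1) → α, (∏ i : Fin L, M (x i.succ) (x i.castSucc)) * π (x 0) =
      ρ ^ L * ∑ i, π i := by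
  induction L with
  | zero => simpa using Fintype.sum_equiv (Equiv.funUnique (Fin 1) α) _ _ fun _ => rfl
  | succ L ih =>
    rw [sum_fun_cons, pow_succ', mul_assoc, ← ih, mul_sum]
    refine sum_congr rfl fun s _ => ?_
    simp only [Fin.prod_univ_succ, Fin.cons_zero, Fin.cons_succ, ← Fin.succ_castSucc,
      Fin.castSucc_zero]
    rw [mul_left_comm, ← heig (s 0), mul_sum]
    exact sum_congr rfl fun z _ => by ring

theorem sum_prod_le_perronConstant_mul_pow [Nonempty α] {M : Matrix α α ℝ} {ρ : ℝ} {π : α → ℝ}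
    (hM : ∀ i j, 0 ≤ M i j) (hρ : 0 < ρ) (hπ : ∀ i, 0 < π i)
    (heig : ∀ i, ∑ j, M i j * π j = ρ * π i) (L : ℕ) :
    ∑ x : Fin (L + 1) → α, ∏ i : Fin L, M (x i.succ) (x i.castSucc) ≤
      perronConstant π ρ * ρ ^ (L + 1) := by
  obtain ⟨i₀, -, hmin⟩ := exists_min_image univ π univ_nonempty
  have hγ : (∑ j, π j) / (π i₀ * ρ) ≤ perronConstant π ρ :=
    le_ciSup (f := fun i => (∑ j, π j) / (π i * ρ)) (Set.finite_range _).bddAbove i₀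
  calc ∑ x : Fin (L + 1) → α, ∏ i : Fin L, M (x i.succ) (x i.castSucc)
      ≤ ∑ x : Fin (L + 1) → α,
          (π i₀)⁻¹ * ((∏ i : Fin L, M (x i.succ) (x i.castSucc)) * π (x 0)) := by
        refine sum_le_sum fun x _ => ?_
        have hP : 0 ≤ ∏ i : Fin L, M (x i.succ) (x i.castSucc) := prod_nonneg fun i _ => hM _ _
        have h₁ : 1 ≤ π (x 0) / π i₀ := (one_le_div (hπ i₀)).2 (hmin _ (mem_univ _))
        calc _ ≤ (∏ i : Fin L, M (x i.succ) (x i.castSucc)) * (π (x 0) / π i₀) :=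
              le_mul_of_one_le_right hP h₁
          _ = _ := by ring
    _ = (∑ j, π j) / (π i₀ * ρ) * ρ ^ (L + 1) := by
        rw [← mul_sum, sum_prod_mul_eigenvector heig]
        field_simp [(hπ i₀).ne', hρ.ne']
        ring
    _ ≤ perronConstant π ρ * ρ ^ (L + 1) := by gcongr

theorem one_le_perronConstant [Nonempty α] {M : Matrix α α ℝ} {ρ : ℝ} {π : α → ℝ}
    (hM1 : ∀ i j, M i j ≤ 1) (hρ : 0 < ρ) (hπ : ∀ i, 0 < π i)
    (heig : ∀ i, ∑ j, M i j * π j = ρ * π i) : 1 ≤ perronConstant π ρ := by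
  obtain ⟨i⟩ := ‹Nonempty α›
  have h : ρ * π i ≤ ∑ j, π j := by
    rw [← heig i]
    exact sum_le_sum fun j _ => mul_le_of_le_one_left (hπ j).le (hM1 i j)
  calc (1 : ℝ) ≤ (∑ j, π j) / (π i * ρ) := by
        rw [one_le_div (mul_pos (hπ i) hρ), mul_comm]
        exact h
    _ ≤ perronConstant π ρ :=
        le_ciSup (f := fun i => (∑ j, π j) / (π i * ρ)) (Set.finite_range _).bddAbove i

end Perron

/-- For a stationary Markov chain with positive transition matrix `Q`,
two physically disjoint length-`ℓ` windows `X` (starting at `a`) and `Y` (starting at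
`b ≥ a + ℓ`) satisfy `P(X = Y) ≤ γ ρ^ℓ`, where `ρ` is the Perron eigenvalue of
`Q̄ = (q_{ij}²)` and `γ = max_i ‖π‖₁/(π_i ρ)` for its positive eigenvector `π`. -/
theorem markov_disjoint_windows_equal_bound (Q : Matrix (Fin 4) (Fin 4) ℝ)
    (hpos : ∀ i j, 0 < Q i j) (hcol : ∀ j, ∑ i, Q i j = 1)
    (p : Fin 4 → ℝ) (hp : ∀ i, 0 ≤ p i) (hpsum : ∑ i, p i = 1)
    (ρ : ℝ) (hρ : 0 < ρ) (π : Fin 4 → ℝ) (hπ : ∀ i, 0 < π i)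
    (heig : ∀ i, ∑ j, (Q i j) ^ 2 * π j = ρ * π i)
    (m ℓ a b : ℕ) (hab : a + ℓ ≤ b) (hbm : b + ℓ ≤ m + 1) :
    ∑ s : Fin (m + 1) → Fin 4,
        (p (s 0) * ∏ t : Fin m, Q (s t.succ) (s t.castSucc)) *
          (if ∀ i : Fin ℓ,
              s ⟨a + i.1, by have := i.isLt; omega⟩
                = s ⟨b + i.1, by have := i.isLt; omega⟩
           then (1 : ℝ) else 0)
      ≤ (⨆ i : Fin 4, (∑ j, π j) / (π i * ρ)) * ρ ^ ℓ := by
  have hQ : ∀ i j, 0 ≤ Q i j := fun i j => (hpos i j).le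
  have hQ1 : ∀ i j, Q i j ≤ 1 := fun i j =>
    (single_le_sum (fun k _ => hQ k j) (mem_univ i)).trans (hcol j).le
  calc _ = ∑ x : Fin ℓ → Fin 4, ∑ s : Fin (m + 1) → Fin 4,
        if Respects (windowPins a b x) s then pathWeight Q p s else 0 := by
        refine Eq.trans (sum_congr rfl fun s _ => ?_) sum_comm
        exact (congrArg (pathWeight Q p s * ·) (ite_window_eq_sum_ite_respects hab hbm s)).trans
          (by simp only [mul_sum, mul_ite, mul_one, mul_zero])
    _ ≤ ∑ x : Fin ℓ → Fin 4, ∏ t ∈ range m, pinnedTransition Q (windowPins a b x) t :=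
        sum_le_sum fun x _ =>
          sum_ite_respects_pathWeight_le hQ (fun j => (hcol j).le) hp hpsum.le _ m
    _ ≤ perronConstant π ρ * ρ ^ ℓ := ?_
  obtain _ | L := ℓ
  · rw [Fintype.sum_unique, pow_zero, mul_one]
    exact (prod_le_one (fun t _ => pinnedTransition_nonneg hQ _ t)
      fun t _ => pinnedTransition_le_one hQ1 _ t).trans
        (one_le_perronConstant (M := fun i j => Q i j ^ 2)
          (fun i j => pow_le_one₀ (hQ i j) (hQ1 i j)) hρ hπ heig)
  · calc _ ≤ ∑ x : Fin (L + 1) → Fin 4, ∏ i : Fin L, Q (x i.succ) (x i.castSucc) ^ 2 :=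
          sum_le_sum fun x _ => prod_pinnedTransition_windowPins_le hQ hQ1 hab (by omega) x
      _ ≤ _ := sum_prod_le_perronConstant_mul_pow (M := fun i j => Q i j ^ 2)
          (fun i j => sq_nonneg _) hρ hπ heig L
end

section
/- Let (S_n) be a stationary Markov chain on a finite alphabet with positive transition matrix Q. Let X = (S_1,...,S_ℓ) and Y = (S_{ℓ-k+1},...,S_{2ℓ-k}) be two overlapping length-ℓ windows, 0 < k < ℓ. Then P(X = Y) ≤ √γ · ρ^{ℓ/2}, where ρ = ρ_max(Q̄) ≤ 1, Q̄ = (q_{ij}²), and γ is the Perron constant. The proof uses Cauchy–Schwarz: P(X=Y) = ∑ p_{i_1}(∏ q)^q(∏' q) ≤ √(∑ p_{i_1}²) · √(∑ (∏ q²)^q (∏' q²)). -/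
/-!
On the event `X = Y` the path `S_1 … S_{2ℓ-k}` has period `d = ℓ - k`, so it is the periodic
extension of its first `d` letters `x`. Its probability then factors as
`p(x₁) · L(x) · W(x)`, where `L` is the product of the `d` transitions of one full lap and `W`
the product of the first `ℓ - 1` transitions. Cauchy–Schwarz with weights `p(x₁) L(x)` gives
`P(X = Y)² ≤ (∑ p L) (∑ p L W²)`. Both sums only grow when the periodic words are replaced by all
words, and then `∑ p L = 1` since `Q` is column stochastic, while `∑ p L W² ≤ ∑ p W²` is bounded
through the Perron vector `π` of `Q̄`, using `p ≤ 1 ≤ (γρ / ‖π‖₁) π`.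
-/

open Finset Matrix

section Walks

variable {α R : Type*} [Fintype α] [DecidableEq α] [CommSemiring R]

theorem pow_mulVec_of_mulVec_eq_smul {M : Matrix α α R} {v : α → R} {c : R}
    (h : M *ᵥ v = c • v) (n : ℕ) : M ^ n *ᵥ v = c ^ n • v := by
  induction n with
  | zero => simp
  | succ n ih => rw [pow_succ, ← mulVec_mulVec, h, mulVec_smul, ih, smul_smul, pow_succ']

theorem sum_mul_prod_eq_sum_pow_mulVec (M : Matrix α α R) (n : ℕ) (f : α → R) :
    ∑ y : Fin (n + 1) → α, f (y 0) * ∏ t : Fin n, M (y t.succ) (y t.castSucc) =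
      ∑ i, (M ^ n *ᵥ f) i := by
  induction n generalizing f with
  | zero => simp [← (Equiv.funUnique (Fin 1) α).symm.sum_comp]
  | succ n ih =>
    have first_step (i : α) : ∑ j, f j * M i j = (M *ᵥ f) i := by
      simp only [mulVec, dotProduct, mul_comm]
    rw [← (Fin.consEquiv fun _ => α).sum_comp, Fintype.sum_prod_type, Finset.sum_comm]
    simp only [Fin.consEquiv_apply, Fin.cons_zero, Fin.prod_univ_succ, Fin.cons_succ,
      Fin.castSucc_zero, ← Fin.succ_castSucc, ← mul_assoc, ← Finset.sum_mul, first_step, ih,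
      mulVec_mulVec, pow_succ]

end Walks

section Periodic

-- The cast `ℕ → Fin d` reduces modulo `d`, so for `x : Fin d → α` the map `fun t => x t` is
-- the `d`-periodic extension of `x`; this is how periodic paths are written throughout.
open Fin.NatCast

variable {α : Type*}

def HasPeriod {N : ℕ} (s : Fin N → α) (d : ℕ) : Prop :=
  ∀ i (h : i + d < N), s ⟨i, by omega⟩ = s ⟨i + d, h⟩

theorem HasPeriod.apply_eq_apply_mod {N d : ℕ} {s : Fin N → α} (hs : HasPeriod s d)
    (t : Fin N) : s t = s ⟨t % d, (Nat.mod_le t d).trans_lt t.2⟩ := by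
  have shift (r q : ℕ) (h : r + d * q < N) : s ⟨r + d * q, h⟩ = s ⟨r, by omega⟩ := by
    induction q with
    | zero => rfl
    | succ q ih =>
      calc s ⟨r + d * (q + 1), h⟩ = s ⟨r + d * q + d, by linarith⟩ :=
            congrArg s (Fin.ext (by ring))
        _ = s ⟨r, by omega⟩ := (hs _ _).symm.trans (ih _)
  calc s t = s ⟨t % d + d * (t / d), by rw [Nat.mod_add_div]; exact t.2⟩ :=
        congrArg s (Fin.ext (Nat.mod_add_div t d).symm)
    _ = _ := shift _ _ _

variable {N d : ℕ} [NeZero d]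

def periodicEquiv (hd : d ≤ N) : (Fin d → α) ≃ {s : Fin N → α // HasPeriod s d} where
  toFun x := ⟨fun t => x (t : ℕ), fun i h => by simp⟩
  invFun s := s.1 ∘ Fin.castLE hd
  left_inv x := funext fun j => by simp
  right_inv s := Subtype.ext <| funext fun t => (s.2.apply_eq_apply_mod t).symm

variable [Fintype α]

theorem sum_ite_hasPeriod (hd : d ≤ N) [DecidablePred fun s : Fin N → α => HasPeriod s d]
    {M : Type*} [AddCommMonoid M] (F : (Fin N → α) → M) :
    ∑ s, (if HasPeriod s d then F s else 0) = ∑ x : Fin d → α, F fun t => x (t : ℕ) := by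
  rw [← Finset.sum_filter, Finset.sum_subtype (p := fun s => HasPeriod s d) _ fun s => by simp]
  exact ((periodicEquiv hd).sum_comp fun s => F s.1).symm

theorem sum_periodic_le_sum (hd : d ≤ N) {M : Type*} [AddCommMonoid M] [PartialOrder M]
    [IsOrderedAddMonoid M] {F : (Fin N → α) → M} (hF : ∀ s, 0 ≤ F s) :
    ∑ x : Fin d → α, F (fun t => x (t : ℕ)) ≤ ∑ s, F s := by
  classical
  rw [← sum_ite_hasPeriod hd]
  exact sum_le_sum fun s _ => by split_ifs <;> simp [hF]

end Periodic

section PathProd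

open Fin.NatCast

variable {α R : Type*}

/-- `M i j` weighs a step from `j` to `i`, the column-stochastic convention of the theorem. -/
def pathProd [CommMonoid R] (M : Matrix α α R) (u : ℕ → α) (n : ℕ) : R :=
  ∏ t ∈ range n, M (u (t + 1)) (u t)

theorem pathProd_add [CommMonoid R] (M : Matrix α α R) (u : ℕ → α) (m n : ℕ) :
    pathProd M u (m + n) = pathProd M u m * pathProd M (fun t => u (m + t)) n := by
  simp only [pathProd, prod_range_add, add_assoc]

theorem pathProd_periodic_add [CommMonoid R] (M : Matrix α α R) {d : ℕ} [NeZero d]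
    (x : Fin d → α) (n : ℕ) :
    pathProd M (fun t => x t) (d + n) =
      pathProd M (fun t => x t) d * pathProd M (fun t => x t) n := by
  simp [pathProd_add]

theorem pathProd_nonneg [CommSemiring R] [PartialOrder R] [IsOrderedRing R] {M : Matrix α α R}
    (hM : ∀ i j, 0 ≤ M i j) (u : ℕ → α) (n : ℕ) : 0 ≤ pathProd M u n :=
  prod_nonneg fun _ _ => hM _ _

variable [Fintype α] [DecidableEq α]

theorem pathProd_le_one [CommSemiring R] [PartialOrder R] [IsOrderedRing R] {M : Matrix α α R}
    (hM : M ∈ colStochastic R α) (u : ℕ → α) (n : ℕ) : pathProd M u n ≤ 1 :=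
  prod_le_one (fun _ _ => hM.1 _ _) fun _ _ => le_one_of_mem_colStochastic hM

theorem sum_periodic_mul_pathProd_le [CommSemiring R] [PartialOrder R] [IsOrderedRing R]
    {M : Matrix α α R} {f : α → R} {d n : ℕ} [NeZero d] (hd : d ≤ n + 1)
    (hM : ∀ i j, 0 ≤ M i j) (hf : ∀ i, 0 ≤ f i) :
    ∑ x : Fin d → α, f (x 0) * pathProd M (fun t => x t) n ≤ ∑ i, (M ^ n *ᵥ f) i := by
  rw [← sum_mul_prod_eq_sum_pow_mulVec]
  convert sum_periodic_le_sum hd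
    (F := fun y : Fin (n + 1) → α => f (y 0) * ∏ t : Fin n, M (y t.succ) (y t.castSucc))
    (fun y => mul_nonneg (hf _) (prod_nonneg fun t _ => hM _ _)) using 2 with x
  rw [pathProd, ← Fin.prod_univ_eq_prod_range]
  rfl

theorem sum_periodic_mul_pathProd_le_sum [CommSemiring R] [PartialOrder R] [IsOrderedRing R]
    {M : Matrix α α R} (hM : M ∈ colStochastic R α) {f : α → R} (hf : ∀ i, 0 ≤ f i)
    {d n : ℕ} [NeZero d] (hd : d ≤ n + 1) :
    ∑ x : Fin d → α, f (x 0) * pathProd M (fun t => x t) n ≤ ∑ i, f i :=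
  (sum_periodic_mul_pathProd_le hd hM.1 hf).trans_eq
    (sum_mulVec_of_mem_colStochastic (pow_mem hM n))

theorem sum_overlapping_windows_eq_sum_periodic [CommSemiring R] (Q : Matrix α α R) (p : α → R)
    {ℓ k : ℕ} (hkl : k + 1 ≤ ℓ) [NeZero (ℓ - k)] :
    ∑ s : Fin (2 * ℓ - k) → α,
        (p (s ⟨0, by omega⟩) *
            ∏ t : Fin (2 * ℓ - k - 1),
              Q (s ⟨t.1 + 1, by have := t.isLt; omega⟩) (s ⟨t.1, by have := t.isLt; omega⟩)) *
          (if ∀ i : Fin ℓ,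
              s ⟨i.1, by have := i.isLt; omega⟩ = s ⟨i.1 + (ℓ - k), by have := i.isLt; omega⟩
           then (1 : R) else 0) =
      ∑ x : Fin (ℓ - k) → α,
        p (x 0) * pathProd Q (fun t => x t) (ℓ - k) * pathProd Q (fun t => x t) (ℓ - 1) := by
  classical
  have hcond : ∀ s : Fin (2 * ℓ - k) → α,
      (∀ i : Fin ℓ, s ⟨i, by have := i.isLt; omega⟩ = s ⟨i + (ℓ - k), by have := i.isLt; omega⟩)
        ↔ HasPeriod s (ℓ - k) :=
    fun s => ⟨fun h i hi => h ⟨i, by omega⟩, fun h i => h i (by omega)⟩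
  simp only [mul_boole, hcond]
  rw [sum_ite_hasPeriod (by omega)]
  refine sum_congr rfl fun x _ => ?_
  rw [mul_assoc, ← pathProd_periodic_add, show ℓ - k + (ℓ - 1) = 2 * ℓ - k - 1 by omega,
    pathProd, ← Fin.prod_univ_eq_prod_range]
  rfl

variable [CommRing R] [LinearOrder R] [IsStrictOrderedRing R]

theorem sum_periodic_mul_pathProd_sq_le {M : Matrix α α R} {π : α → R} {ρ : R}
    (hπ : ∀ i, 0 ≤ π i) (heig : M.map (· ^ 2) *ᵥ π = ρ • π) {d n : ℕ} [NeZero d]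
    (hd : d ≤ n + 1) :
    ∑ x : Fin d → α, π (x 0) * pathProd M (fun t => x t) n ^ 2 ≤ ρ ^ n * ∑ i, π i := by
  have pathProd_sq (u : ℕ → α) : pathProd M u n ^ 2 = pathProd (M.map (· ^ 2)) u n := by
    simp only [pathProd, prod_pow, map_apply]
  simp only [pathProd_sq]
  refine (sum_periodic_mul_pathProd_le (M := M.map (· ^ 2)) hd
    (fun i j => by simp [sq_nonneg]) hπ).trans_eq ?_
  simp only [pow_mulVec_of_mulVec_eq_smul heig, Pi.smul_apply, smul_eq_mul, mul_sum]

theorem sum_periodic_mul_pathProd_mul_pathProd_sq_le {M : Matrix α α R}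
    (hM : M ∈ colStochastic R α) {f π : α → R} {ρ c : R} (hf : ∀ i, 0 ≤ f i)
    (hπ : ∀ i, 0 ≤ π i) (heig : M.map (· ^ 2) *ᵥ π = ρ • π) (hc : 0 ≤ c)
    (hfc : ∀ i, f i ≤ c * π i) {d n : ℕ} [NeZero d] (hd : d ≤ n + 1) (m : ℕ) :
    ∑ x : Fin d → α, f (x 0) * pathProd M (fun t => x t) m * pathProd M (fun t => x t) n ^ 2 ≤
      c * (ρ ^ n * ∑ i, π i) := by
  calc _ ≤ ∑ x : Fin d → α, c * (π (x 0) * pathProd M (fun t => x t) n ^ 2) := by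
        refine sum_le_sum fun x _ => ?_
        calc _ ≤ f (x 0) * 1 * pathProd M (fun t => x t) n ^ 2 := by
              gcongr
              · exact hf _
              · exact pathProd_le_one hM _ _
          _ ≤ _ := by rw [mul_one, ← mul_assoc]; gcongr; exact hfc _
    _ = c * ∑ x : Fin d → α, π (x 0) * pathProd M (fun t => x t) n ^ 2 := (mul_sum ..).symm
    _ ≤ _ := mul_le_mul_of_nonneg_left (sum_periodic_mul_pathProd_sq_le hπ heig hd) hc

end PathProd

theorem sum_mul_le_sqrt_of_sum_le_one {ι : Type*} (s : Finset ι) {w g : ι → ℝ}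
    (hw : ∀ i ∈ s, 0 ≤ w i) (hw1 : ∑ i ∈ s, w i ≤ 1) {B : ℝ}
    (hB : ∑ i ∈ s, w i * g i ^ 2 ≤ B) : ∑ i ∈ s, w i * g i ≤ √B := by
  have cauchy_schwarz :
      (∑ i ∈ s, w i * g i) ^ 2 ≤ (∑ i ∈ s, w i) * ∑ i ∈ s, w i * g i ^ 2 :=
    sum_sq_le_sum_mul_sum_of_sq_le_mul s hw
      (fun i hi => mul_nonneg (hw i hi) (sq_nonneg _)) fun i _ => le_of_eq (by ring)
  have hB' : (∑ i ∈ s, w i) * ∑ i ∈ s, w i * g i ^ 2 ≤ B :=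
    (mul_le_of_le_one_left (sum_nonneg fun i hi => mul_nonneg (hw i hi) (sq_nonneg _)) hw1).trans
      hB
  exact (le_abs_self _).trans (Real.abs_le_sqrt (cauchy_schwarz.trans hB'))

noncomputable def perronConst {ι : Type*} [Fintype ι] (π : ι → ℝ) (ρ : ℝ) : ℝ :=
  ⨆ i, (∑ j, π j) / (π i * ρ)

section PerronConst

variable {ι : Type*} [Fintype ι] {π : ι → ℝ} {ρ : ℝ}

theorem perronConst_nonneg (hπ : ∀ i, 0 ≤ π i) (hρ : 0 ≤ ρ) : 0 ≤ perronConst π ρ :=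
  Real.iSup_nonneg fun i => div_nonneg (sum_nonneg fun j _ => hπ j) (mul_nonneg (hπ i) hρ)

theorem one_le_perronConst_mul (hπ : ∀ i, 0 < π i) (hρ : 0 < ρ) (i : ι) :
    1 ≤ perronConst π ρ * ρ / (∑ j, π j) * π i := by
  have hπsum : 0 < ∑ j, π j := sum_pos (fun j _ => hπ j) ⟨i, mem_univ i⟩
  have hle : (∑ j, π j) / (π i * ρ) ≤ perronConst π ρ :=
    le_ciSup (Set.finite_range fun i => (∑ j, π j) / (π i * ρ)).bddAbove i
  rw [div_le_iff₀ (mul_pos (hπ i) hρ)] at hle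
  rw [div_mul_eq_mul_div, one_le_div hπsum]
  linarith

end PerronConst

/-- For a stationary Markov chain with positive transition matrix `Q`,
two overlapping length-`ℓ` windows `X = (S_1,…,S_ℓ)` and `Y = (S_{ℓ-k+1},…,S_{2ℓ-k})`
(0 < k < ℓ) satisfy `P(X = Y) ≤ √γ · ρ^{ℓ/2}`, where `ρ ≤ 1` is the Perron eigenvalue
of `Q̄ = (q_{ij}²)` with positive eigenvector `π`, and `γ = max_i ‖π‖₁/(π_i ρ)`. -/
theorem markov_overlapping_windows_equal_bound (Q : Matrix (Fin 4) (Fin 4) ℝ)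
    (hpos : ∀ i j, 0 < Q i j) (hcol : ∀ j, ∑ i, Q i j = 1)
    (p : Fin 4 → ℝ) (hp : ∀ i, 0 ≤ p i) (hpsum : ∑ i, p i = 1)
    (ρ : ℝ) (hρ : 0 < ρ) (π : Fin 4 → ℝ) (hπ : ∀ i, 0 < π i)
    (heig : ∀ i, ∑ j, (Q i j) ^ 2 * π j = ρ * π i)
    (ℓ k : ℕ) (hkl : k < ℓ) :
    ∑ s : Fin (2 * ℓ - k) → Fin 4,
        (p (s ⟨0, by omega⟩) *
            ∏ t : Fin (2 * ℓ - k - 1),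
              Q (s ⟨t.1 + 1, by have := t.isLt; omega⟩)
                (s ⟨t.1, by have := t.isLt; omega⟩)) *
          (if ∀ i : Fin ℓ,
              s ⟨i.1, by have := i.isLt; omega⟩
                = s ⟨i.1 + (ℓ - k), by have := i.isLt; omega⟩
           then (1 : ℝ) else 0)
      ≤ Real.sqrt (⨆ i : Fin 4, (∑ j, π j) / (π i * ρ)) *
          Real.rpow ρ ((ℓ : ℝ) / 2) := by
  have : NeZero (ℓ - k) := ⟨by omega⟩
  have hQ : Q ∈ colStochastic ℝ (Fin 4) :=
    mem_colStochastic_iff_sum.2 ⟨fun i j => (hpos i j).le, hcol⟩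
  have heig' : Q.map (· ^ 2) *ᵥ π = ρ • π :=
    funext fun i => by simpa [mulVec, dotProduct] using heig i
  have hc : 0 ≤ perronConst π ρ * ρ / ∑ j, π j :=
    div_nonneg (mul_nonneg (perronConst_nonneg (fun i => (hπ i).le) hρ.le) hρ.le)
      (sum_nonneg fun i _ => (hπ i).le)
  have hp_le (i : Fin 4) : p i ≤ perronConst π ρ * ρ / (∑ j, π j) * π i :=
    ((single_le_sum (fun j _ => hp j) (mem_univ i)).trans_eq hpsum).trans
      (one_le_perronConst_mul hπ hρ i)
  rw [sum_overlapping_windows_eq_sum_periodic Q p hkl]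
  calc _ ≤ √(perronConst π ρ * ρ ^ ℓ) := by
        refine sum_mul_le_sqrt_of_sum_le_one _
          (fun x _ => mul_nonneg (hp _) (pathProd_nonneg hQ.1 _ _))
          ((sum_periodic_mul_pathProd_le_sum hQ hp (by omega)).trans_eq hpsum)
          ((sum_periodic_mul_pathProd_mul_pathProd_sq_le hQ hp (fun i => (hπ i).le) heig' hc
            hp_le (by omega) _).trans_eq ?_)
        have hπsum : ∑ j, π j ≠ 0 := (sum_pos (fun i _ => hπ i) univ_nonempty).ne'
        rw [← Nat.sub_add_cancel (show 1 ≤ ℓ by omega), pow_succ, Nat.add_sub_cancel]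
        field_simp
    _ = _ := by
        rw [Real.sqrt_mul' _ (by positivity), Real.sqrt_eq_rpow (ρ ^ ℓ),
          ← Real.rpow_natCast_mul hρ.le, mul_one_div]
        rfl
end

section
/- Let ℓ = 2k and consider indices {1,...,ℓ} and the shift map j ↦ j + (ℓ - k') for some 0 < k' < ℓ with overlap structure as in a self-overlapping window. Then the index set {1,...,ℓ} can be partitioned into two sets J₁ and J₂ of equal size ℓ/2 such that within each set, no two indices j₁ < j₂ satisfy j₁ + (ℓ - k') = j₂. -/
open Finset

/-- The color of an index `j` with respect to shift `m`. -/
private lemma shift_flip (m j : ℕ) (hm : 0 < m) :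
    ((j + m) / m + (j + m) % m) % 2 ≠ (j / m + j % m) % 2 := by
  rw [Nat.add_div_right _ hm, Nat.add_mod_right]
  omega

private lemma succ_flip (m t : ℕ) (hm : 0 < m) :
    ((2 * t + 1) / m + (2 * t + 1) % m) % 2 ≠ ((2 * t) / m + (2 * t) % m) % 2 := by
  set q := 2 * t / m with hq
  set r := 2 * t % m with hr
  have hqr : m * q + r = 2 * t := Nat.div_add_mod (2 * t) m
  have hrm : r < m := Nat.mod_lt _ hm
  rcases eq_or_ne r (m - 1) with h | h
  · -- crossing a block boundary; then `m` must be odd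
    have heq : 2 * t + 1 = m * (q + 1) := by rw [Nat.mul_add, Nat.mul_one]; omega
    have hodd : Odd (m * (q + 1)) := ⟨t, heq.symm⟩
    have hmodd : Odd m := (Nat.odd_mul.mp hodd).1
    have hdiv : (2 * t + 1) / m = q + 1 := by
      rw [heq, Nat.mul_div_cancel_left _ hm]
    have hmod : (2 * t + 1) % m = 0 := by
      rw [heq, Nat.mul_mod_right]
    rw [hdiv, hmod]
    obtain ⟨c, hc⟩ := hmodd
    omega
  · -- staying within the block
    have hlt : r + 1 < m := by omega
    have hdm : (2 * t + 1) / m = q ∧ (2 * t + 1) % m = r + 1 := by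
      refine (Nat.div_mod_unique hm).mpr ⟨by omega, hlt⟩
    rw [hdm.1, hdm.2]
    omega

private lemma card_color (m : ℕ) (hm : 0 < m) (k : ℕ) :
    ((Finset.range (2 * k)).filter (fun j => (j / m + j % m) % 2 = 0)).card = k := by
  induction k with
  | zero => simp
  | succ n ih =>
    have h2 : 2 * (n + 1) = (2 * n + 1) + 1 := by ring
    rw [h2, Finset.range_add_one, Finset.filter_insert, Finset.range_add_one, Finset.filter_insert]
    have hflip := succ_flip m n hm
    by_cases h : ((2 * n) / m + (2 * n) % m) % 2 = 0
    · have h' : ¬ ((2 * n + 1) / m + (2 * n + 1) % m) % 2 = 0 := by omega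
      rw [if_neg h', if_pos h,
        Finset.card_insert_of_notMem (by simp), ih]
    · have h' : ((2 * n + 1) / m + (2 * n + 1) % m) % 2 = 0 := by omega
      rw [if_pos h', if_neg h,
        Finset.card_insert_of_notMem (by simp), ih]

/-- For `ℓ = 2k` even and a shift `m = ℓ - k'` with `0 < k' < ℓ`, the
index set `{0,…,ℓ-1}` can be partitioned into two sets `J₁, J₂` of equal size `k`
such that no index within a set is the `m`-shift of another index in the same set. -/
theorem shift_free_equal_partition (k k' : ℕ) (hk'0 : 0 < k') (hk' : k' < 2 * k) :
    ∃ J₁ J₂ : Finset ℕ,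
      J₁ ∪ J₂ = Finset.range (2 * k) ∧
      Disjoint J₁ J₂ ∧
      J₁.card = k ∧ J₂.card = k ∧
      (∀ j ∈ J₁, j + (2 * k - k') ∉ J₁) ∧
      (∀ j ∈ J₂, j + (2 * k - k') ∉ J₂) := by
  set m := 2 * k - k' with hmdef
  have hm : 0 < m := by omega
  refine ⟨(Finset.range (2 * k)).filter (fun j => (j / m + j % m) % 2 = 0),
          (Finset.range (2 * k)).filter (fun j => ¬ (j / m + j % m) % 2 = 0),
          ?_, ?_, ?_, ?_, ?_, ?_⟩
  · exact Finset.filter_union_filter_not_eq _ _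
  · exact Finset.disjoint_filter_filter_not _ _ _
  · exact card_color m hm k
  · have hu : (((Finset.range (2 * k)).filter (fun j => (j / m + j % m) % 2 = 0)).card
        + ((Finset.range (2 * k)).filter (fun j => ¬ (j / m + j % m) % 2 = 0)).card) = 2 * k := by
      rw [Finset.card_filter_add_card_filter_not, Finset.card_range]
    have h1 := card_color m hm k
    omega
  · intro j hj hj'
    simp only [Finset.mem_filter] at hj hj'
    have := shift_flip m j hm
    omega
  · intro j hj hj'
    simp only [Finset.mem_filter] at hj hj'
    have := shift_flip m j hm
    omega
end
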